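/- In the setting of the fused bidirectional recurrence y_i = W_f h_i + W_b ĥ_i, if W_f = W_b, then for every offset Δ with 1 ≤ i−Δ and i+Δ ≤ N, the Jacobian of y_i with respect to x_{i−Δ} equals the Jacobian of y_i with respect to x_{i+Δ}, both equal to W_f A^Δ B. -/

import Mathlib

/-- Fused bidirectional state-space representation
`y_i = W_f h_i + W_b ĥ_i` with
`h_i = ∑_{m=1}^i A^{i-m} B x_m` and `ĥ_i = ∑_{m=i}^N A^{m-i} B x_m`. -/
def fusedOutput {d e p : ℕ} (N : ℕ) (A : Matrix (Fin d) (Fin d) ℝ)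
    (B : Matrix (Fin d) (Fin e) ℝ)
    (Wf Wb : Matrix (Fin p) (Fin d) ℝ)
    (x : ℕ → Fin e → ℝ) (i : ℕ) : Fin p → ℝ :=
  Wf.mulVec (∑ m ∈ Finset.Icc 1 i, (A ^ (i - m) * B).mulVec (x m))
    + Wb.mulVec (∑ m ∈ Finset.Icc i N, (A ^ (m - i) * B).mulVec (x m))

/-! The output `y_i` is affine in each single input `x_k`, so its Jacobian with respect to `x_k`
is the linear part, read off from the two scans: `W_f A^(i-k) B` if `x_k` is seen by the forward
scan (`1 ≤ k ≤ i`) plus `W_b A^(k-i) B` if it is seen by the backward scan (`i ≤ k ≤ N`). For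
`k = i - Δ` and `k = i + Δ` with `Δ ≥ 1` exactly one scan sees `x_k`, with the same exponent `Δ`. -/

open Finset Matrix Function

theorem Matrix.sum_mulVec_update {ι m n R : Type*} [DecidableEq ι] [Fintype n]
    [NonUnitalNonAssocSemiring R] (s : Finset ι) (M : ι → Matrix m n R) (x : ι → n → R)
    (k : ι) (u : n → R) :
    ∑ j ∈ s, M j *ᵥ update x k u j
      = (if k ∈ s then M k *ᵥ u else 0) + ∑ j ∈ s \ {k}, M j *ᵥ x j := by
  simp_rw [apply_update (fun j => (M j *ᵥ ·))]
  split_ifs with hk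
  · exact sum_update_of_mem hk _ _
  · rw [sum_update_of_notMem hk, zero_add, sdiff_singleton_eq_erase, erase_eq_of_notMem hk]

def fusedJacobian {d e p : ℕ} (N : ℕ) (A : Matrix (Fin d) (Fin d) ℝ)
    (B : Matrix (Fin d) (Fin e) ℝ) (Wf Wb : Matrix (Fin p) (Fin d) ℝ) (i k : ℕ) :
    Matrix (Fin p) (Fin e) ℝ :=
  (if k ∈ Icc 1 i then Wf * A ^ (i - k) * B else 0)
    + (if k ∈ Icc i N then Wb * A ^ (k - i) * B else 0)

section

variable {d e p : ℕ} (N : ℕ) (A : Matrix (Fin d) (Fin d) ℝ) (B : Matrix (Fin d) (Fin e) ℝ)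
  (Wf Wb : Matrix (Fin p) (Fin d) ℝ) (x : ℕ → Fin e → ℝ) (i k : ℕ)

theorem fusedOutput_update (u : Fin e → ℝ) :
    fusedOutput N A B Wf Wb (update x k u) i
      = fusedJacobian N A B Wf Wb i k *ᵥ u + fusedOutput N A B Wf Wb (update x k 0) i := by
  simp only [fusedOutput, fusedJacobian, sum_mulVec_update, mulVec_add, add_mulVec,
    mulVec_zero, ite_self, zero_add]
  split_ifs <;> simp only [mulVec_mulVec, Matrix.mul_assoc, zero_mulVec, mulVec_zero, zero_add]
    <;> abel

theorem fderiv_fusedOutput_update (v : Fin e → ℝ) :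
    fderiv ℝ (fun u => fusedOutput N A B Wf Wb (update x k u) i) v
      = LinearMap.toContinuousLinearMap (fusedJacobian N A B Wf Wb i k).mulVecLin := by
  rw [funext (fusedOutput_update N A B Wf Wb x i k), fderiv_add_const]
  exact (LinearMap.toContinuousLinearMap (fusedJacobian N A B Wf Wb i k).mulVecLin).fderiv

end

theorem symmetric_fusion_zero_phase (d e p N : ℕ)
    (A : Matrix (Fin d) (Fin d) ℝ) (B : Matrix (Fin d) (Fin e) ℝ)
    (Wf Wb : Matrix (Fin p) (Fin d) ℝ) (hW : Wf = Wb)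
    (x : ℕ → Fin e → ℝ) (i Δ : ℕ)
    (hΔ1 : 1 ≤ Δ) (hlow : Δ < i) (hhigh : i + Δ ≤ N) :
    fderiv ℝ (fun u => fusedOutput N A B Wf Wb (Function.update x (i - Δ) u) i)
        (x (i - Δ))
      = LinearMap.toContinuousLinearMap ((Wf * A ^ Δ * B).mulVecLin) ∧
    fderiv ℝ (fun u => fusedOutput N A B Wf Wb (Function.update x (i + Δ) u) i)
        (x (i + Δ))
      = LinearMap.toContinuousLinearMap ((Wf * A ^ Δ * B).mulVecLin) := by
  have jacobian_before : fusedJacobian N A B Wf Wb i (i - Δ) = Wf * A ^ Δ * B := by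
    rw [fusedJacobian, if_pos (by simp only [mem_Icc]; omega),
      if_neg (by simp only [mem_Icc]; omega), Nat.sub_sub_self hlow.le, add_zero]
  have jacobian_after : fusedJacobian N A B Wf Wb i (i + Δ) = Wf * A ^ Δ * B := by
    rw [fusedJacobian, if_neg (by simp only [mem_Icc]; omega),
      if_pos (by simp only [mem_Icc]; omega), Nat.add_sub_cancel_left, zero_add, hW]
  simp only [fderiv_fusedOutput_update, jacobian_before, jacobian_after, and_self]
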